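/- arXiv:2202.00411 — 5 statements merged into one kernel-verified Lean document; each statement's English description precedes it below -/
import Mathlib

section
/- If the sequence n ↦ P(DLG_6, n)/C(n,6) converges to a limit L as n → ∞, then L ≥ 10/81. -/
open Classical in
/-- Number of `k`-element vertex subsets of `G` whose induced subgraph is isomorphic to `H`,
where `k` is the number of vertices of `H`. -/
noncomputable def inducedCount {α β : Type*} [Fintype α] [Fintype β]
    (H : SimpleGraph α) (G : SimpleGraph β) : ℕ :=
  (Finset.univ.filter fun S : Finset β =>
    S.card = Fintype.card α ∧ Nonempty ((G.induce (S : Set β)) ≃g H)).card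

/-- The maximum of `inducedCount H G` over all graphs `G` on `n` vertices. -/
noncomputable def maxInducedCount {α : Type*} [Fintype α] (H : SimpleGraph α) (n : ℕ) : ℕ :=
  sSup {m | ∃ G : SimpleGraph (Fin n), inducedCount H G = m}

/-- The double loop graph `DLG(1,2)` on `ZMod k`: distinct `i, j` are adjacent iff
`i - j ≡ ±1` or `±2 (mod k)`. -/
def DLG (k : ℕ) : SimpleGraph (ZMod k) where
  Adj i j := i ≠ j ∧ (i - j = 1 ∨ i - j = -1 ∨ i - j = 2 ∨ i - j = -2)
  symm := by
    constructor
    rintro i j ⟨hne, h⟩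
    refine ⟨hne.symm, ?_⟩
    have hji : j - i = -(i - j) := by ring
    rcases h with h | h | h | h <;> rw [hji, h] <;> simp
  loopless := ⟨fun i ⟨h, _⟩ => h rfl⟩

/-! `DLG 6` is the octahedron `K_{2,2,2}`: two vertices are adjacent iff they differ mod 3. In the
balanced complete tripartite graph on `3m` vertices every choice of two vertices from each part
induces a copy, so `P(DLG_6, 3m) ≥ C(m,2)^3`, and `C(m,2)^3 / C(3m,6) → 6! / (2!^3 3^6) = 10/81`. -/

open Filter Finset Topology

namespace SimpleGraph

variable {ι α β : Type*} [DecidableEq ι]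

lemma nonempty_induce_comap_top_iso [Fintype α] {f : β → ι} {g : α → ι} (S : Finset β)
    (hS : ∀ c, #{b ∈ S | f b = c} = #{a | g a = c}) :
    Nonempty ((((⊤ : SimpleGraph ι).comap f).induce (S : Set β)) ≃g
      (⊤ : SimpleGraph ι).comap g) := by
  have e c : {s : (S : Set β) // f s = c} ≃ {a // g a = c} := by
    have hfib : {s : (S : Set β) // f s = c} ≃ {b ∈ S | f b = c} :=
      (Equiv.subtypeSubtypeEquivSubtypeInter (· ∈ S) (f · = c)).trans
        (Equiv.subtypeEquivRight fun b => by simp)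
    refine Classical.choice (Fintype.card_eq.1 ?_)
    rw [Fintype.card_congr hfib, Fintype.card_coe, hS, Fintype.card_subtype]
  refine ⟨⟨Equiv.ofFiberEquiv e, fun {s t} => ?_⟩⟩
  simp only [comap_adj, top_adj, Equiv.ofFiberEquiv_map]
  rfl

theorem prod_choose_card_fiber_le_inducedCount [Fintype ι] [Fintype α] [Fintype β]
    (f : β → ι) (g : α → ι) :
    ∏ c, (#{b | f b = c}).choose #{a | g a = c} ≤
      inducedCount ((⊤ : SimpleGraph ι).comap g) ((⊤ : SimpleGraph ι).comap f) := by
  classical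
  set T := Fintype.piFinset fun c => powersetCard #{a | g a = c} {b | f b = c}
  have hfiber : ∀ t ∈ T, ∀ c, {b ∈ univ.biUnion t | f b = c} = t c := by
    intro t ht c
    simp only [T, Fintype.mem_piFinset, mem_powersetCard, subset_iff, mem_filter_univ] at ht
    ext b
    simp only [mem_filter, mem_biUnion, mem_univ, true_and]
    refine ⟨fun ⟨⟨c', hb⟩, hc⟩ => ?_, fun hb => ⟨⟨c, hb⟩, (ht c).1 hb⟩⟩
    obtain rfl : c' = c := ((ht c').1 hb).symm.trans hc
    exact hb
  have hcard : ∀ t ∈ T, ∀ c, #{b ∈ univ.biUnion t | f b = c} = #{a | g a = c} := by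
    intro t ht c
    rw [hfiber t ht]
    exact (mem_powersetCard.1 (Fintype.mem_piFinset.1 ht c)).2
  calc ∏ c, (#{b | f b = c}).choose #{a | g a = c} = #T := by simp [T]
    _ ≤ _ := by
      rw [inducedCount]
      refine card_le_card_of_injOn (fun t => univ.biUnion t) (fun t ht => ?_) ?_
      · refine mem_filter.2 ⟨mem_univ _, ?_, nonempty_induce_comap_top_iso _ (hcard t ht)⟩
        rw [card_eq_sum_card_fiberwise (f := f) (t := univ) (by simp),
          Fintype.card, card_eq_sum_card_fiberwise (f := g) (t := univ) (by simp)]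
        exact sum_congr rfl fun c _ => hcard t ht c
      · intro t ht t' ht' (htt' : univ.biUnion t = univ.biUnion t')
        funext c
        rw [← hfiber t ht, ← hfiber t' ht', htt']

end SimpleGraph

lemma inducedCount_le_maxInducedCount {α : Type*} [Fintype α] (H : SimpleGraph α) {n : ℕ}
    (G : SimpleGraph (Fin n)) : inducedCount H G ≤ maxInducedCount H n :=
  le_csSup (Set.finite_range fun G : SimpleGraph (Fin n) => inducedCount H G).bddAbove ⟨G, rfl⟩

lemma dlg_six_eq_comap_top :
    DLG 6 = (⊤ : SimpleGraph (Fin 3)).comap fun i : ZMod 6 => Fin.ofNat 3 i.val := by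
  ext i j
  simp only [DLG, SimpleGraph.comap_adj, SimpleGraph.top_adj]
  revert i j
  decide

lemma choose_two_pow_three_le_maxInducedCount_dlg_six (m : ℕ) :
    m.choose 2 ^ 3 ≤ maxInducedCount (DLG 6) (3 * m) := by
  have hpart c : #{v : Fin (3 * m) | (finProdFinEquiv.symm v).1 = c} = m := by
    rw [card_equiv finProdFinEquiv.symm (t := {p : Fin 3 × Fin m | p.1 = c}) fun p => by simp,
      ← univ_product_univ, filter_product_left (· = c), card_product]
    simp [filter_eq']
  have hpart_dlg c : #{i : ZMod 6 | Fin.ofNat 3 i.val = c} = 2 := by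
    revert c
    decide
  calc m.choose 2 ^ 3
      = ∏ c, (#{v : Fin (3 * m) | (finProdFinEquiv.symm v).1 = c}).choose
          #{i : ZMod 6 | Fin.ofNat 3 i.val = c} := by
        simp only [hpart, hpart_dlg, prod_const, card_univ, Fintype.card_fin]
    _ ≤ inducedCount (DLG 6)
          ((⊤ : SimpleGraph (Fin 3)).comap fun v : Fin (3 * m) => (finProdFinEquiv.symm v).1) := by
      rw [dlg_six_eq_comap_top]
      exact SimpleGraph.prod_choose_card_fiber_le_inducedCount _ _
    _ ≤ maxInducedCount (DLG 6) (3 * m) := inducedCount_le_maxInducedCount _ _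

lemma tendsto_three_mul_atTop : Tendsto (fun m : ℕ => 3 * m) atTop atTop :=
  tendsto_id.const_mul_atTop' (by norm_num)

lemma tendsto_choose_two_pow_three_div_choose_six :
    Tendsto (fun m : ℕ => (m.choose 2 : ℝ) ^ 3 / ((3 * m).choose 6 : ℝ)) atTop (𝓝 (10 / 81)) := by
  have hequiv := ((isEquivalent_choose 2).pow 3).div
    ((isEquivalent_choose 6).comp_tendsto tendsto_three_mul_atTop)
  refine hequiv.tendsto_nhds_iff.2 (tendsto_const_nhds.congr' ?_)
  filter_upwards [eventually_ne_atTop 0] with m hm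
  have hm : (m : ℝ) ≠ 0 := Nat.cast_ne_zero.2 hm
  simp only [Pi.div_apply, Pi.pow_apply, Function.comp_apply, Nat.factorial, Nat.cast_mul]
  field_simp
  norm_num

/-- If `P(DLG_6, n)/C(n,6)` converges to `L` as `n → ∞`, then `L ≥ 10/81`. -/
theorem dlg6_inducibility_lower (L : ℝ)
    (h : Filter.Tendsto (fun n : ℕ => (maxInducedCount (DLG 6) n : ℝ) / (n.choose 6 : ℝ))
      Filter.atTop (nhds L)) :
    10 / 81 ≤ L := by
  refine le_of_tendsto_of_tendsto tendsto_choose_two_pow_three_div_choose_six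
    (h.comp tendsto_three_mul_atTop) (Eventually.of_forall fun m => ?_)
  refine div_le_div_of_nonneg_right ?_ (Nat.cast_nonneg _)
  exact_mod_cast choose_two_pow_three_le_maxInducedCount_dlg_six m
end

section
/- Let V be a finite type, let k ≥ 1, and let T be a set of functions from Fin k to V. For D ∈ T and i ∈ Fin k, let N_i(D) be the number of vertices w ∈ V for which there exists D' ∈ T with D'(j) = D(j) for all j < i and D'(i) = w. Then the sum over all D ∈ T of the product over i ∈ Fin k of 1/N_i(D) is at most 1. -/
set_option maxHeartbeats 1000000

open Classical in
private noncomputable def Nf {V : Type*} [Fintype V] {n : ℕ} (T : Finset (Fin n → V))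
    (D : Fin n → V) (i : Fin n) : ℝ :=
  ((Finset.univ.filter fun w : V =>
      ∃ D' ∈ T, (∀ j : Fin n, j < i → D' j = D j) ∧ D' i = w).card : ℝ)

private lemma aux_prefix {V : Type*} [Fintype V] :
    ∀ (n : ℕ) (T : Finset (Fin n → V)),
    ∑ D ∈ T, ∏ i : Fin n, (1 : ℝ) / Nf T D i ≤ 1 := by
  classical
  intro n
  induction n with
  | zero =>
    intro T
    have hT : T.card ≤ 1 := Finset.card_le_one.mpr fun a _ b _ => Subsingleton.elim a b
    simp only [Fin.prod_univ_zero, Finset.sum_const, nsmul_eq_mul, mul_one]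
    exact_mod_cast hT
  | succ n ih =>
    intro T
    have hA : ∀ D ∈ T, Nf T D 0 = ((T.image fun D => D 0).card : ℝ) := by
      intro D hD
      unfold Nf
      congr 1
      congr 1
      ext w
      simp only [Finset.mem_filter, Finset.mem_univ, true_and, Finset.mem_image]
      constructor
      · rintro ⟨D', hD', -, rfl⟩; exact ⟨D', hD', rfl⟩
      · rintro ⟨D', hD', rfl⟩
        exact ⟨D', hD', fun j hj => absurd hj (Fin.not_lt_zero j), rfl⟩
    have hB : ∀ v : V, ∀ D ∈ T.filter (fun D => D 0 = v), ∀ i : Fin n,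
        Nf T D i.succ = Nf ((T.filter fun D => D 0 = v).image Fin.tail) (Fin.tail D) i := by
      intro v D hD i
      rw [Finset.mem_filter] at hD
      obtain ⟨hDT, hDv⟩ := hD
      unfold Nf
      congr 1
      congr 1
      ext w
      simp only [Finset.mem_filter, Finset.mem_univ, true_and, Finset.mem_image]
      constructor
      · rintro ⟨D', hD', hpre, rfl⟩
        refine ⟨Fin.tail D', ⟨D', ⟨hD', ?_⟩, rfl⟩, fun j hj => ?_, rfl⟩
        · rw [hpre 0 (Fin.succ_pos i), hDv]
        · exact hpre j.succ (Fin.succ_lt_succ_iff.mpr hj)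
      · rintro ⟨E, ⟨D', hD', rfl⟩, hpre, rfl⟩
        refine ⟨D', hD'.1, ?_, rfl⟩
        intro j hj
        rcases Fin.eq_zero_or_eq_succ j with rfl | ⟨j', rfl⟩
        · rw [hD'.2, hDv]
        · exact hpre j' (Fin.succ_lt_succ_iff.mp hj)
    set I := T.image (fun D => D 0) with hI
    set m := I.card with hm
    calc ∑ D ∈ T, ∏ i : Fin (n+1), (1 : ℝ) / Nf T D i
        = ∑ v : V, ∑ D ∈ T.filter (fun D => D 0 = v),
            ∏ i : Fin (n+1), (1 : ℝ) / Nf T D i := (Finset.sum_fiberwise _ _ _).symm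
      _ ≤ ∑ v : V, (if v ∈ I then (1 : ℝ)/m else 0) := by
          apply Finset.sum_le_sum
          intro v _
          by_cases hv : v ∈ I
          · rw [if_pos hv]
            have hrw : ∀ D ∈ T.filter (fun D => D 0 = v),
                (∏ i : Fin (n+1), (1 : ℝ) / Nf T D i)
                = (1/m) * ∏ i : Fin n,
                    (1 : ℝ) / Nf ((T.filter fun D => D 0 = v).image Fin.tail) (Fin.tail D) i := by
              intro D hD
              have hDT : D ∈ T := (Finset.mem_filter.mp hD).1
              rw [Fin.prod_univ_succ, hA D hDT]
              congr 1
              exact Finset.prod_congr rfl fun i _ => by rw [hB v D hD i]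
            rw [Finset.sum_congr rfl hrw, ← Finset.mul_sum]
            have hinj : ∀ x ∈ T.filter (fun D => D 0 = v), ∀ y ∈ T.filter (fun D => D 0 = v),
                Fin.tail x = Fin.tail y → x = y := by
              intro x hx y hy h
              have hx0 := (Finset.mem_filter.mp hx).2
              have hy0 := (Finset.mem_filter.mp hy).2
              calc x = Fin.cons (x 0) (Fin.tail x) := (Fin.cons_self_tail x).symm
                _ = Fin.cons (y 0) (Fin.tail y) := by rw [h, hx0, hy0]
                _ = y := Fin.cons_self_tail y
            have hsum : ∑ D ∈ T.filter (fun D => D 0 = v), ∏ i : Fin n,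
                (1 : ℝ) / Nf ((T.filter fun D => D 0 = v).image Fin.tail) (Fin.tail D) i ≤ 1 := by
              have h2 := ih ((T.filter fun D => D 0 = v).image Fin.tail)
              rwa [Finset.sum_image hinj] at h2
            have h0 : (0:ℝ) ≤ 1/m := by positivity
            calc (1/m : ℝ) * ∑ D ∈ T.filter (fun D => D 0 = v), ∏ i : Fin n,
                  (1 : ℝ) / Nf ((T.filter fun D => D 0 = v).image Fin.tail) (Fin.tail D) i
                ≤ (1/m) * 1 := mul_le_mul_of_nonneg_left hsum h0
              _ = 1/m := mul_one _
          · rw [if_neg hv]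
            have hemp : T.filter (fun D => D 0 = v) = ∅ := by
              rw [Finset.filter_eq_empty_iff]
              intro D hD h0
              exact hv (by rw [hI]; exact Finset.mem_image.mpr ⟨D, hD, h0⟩)
            rw [hemp, Finset.sum_empty]
      _ = (m : ℝ) * (1/m) := by
          rw [Finset.sum_ite_mem, Finset.univ_inter, Finset.sum_const, hm, nsmul_eq_mul]
      _ ≤ 1 := by
          rcases eq_or_ne (m:ℝ) 0 with h | h
          · simp [h]
          · rw [mul_one_div, div_self h]

open Classical in
/-- the paper's Lemma 1, abstract form. Let `V` be a finite type, `k ≥ 1`,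
and `T` a set of tuples `Fin k → V`. For `D ∈ T` and `i : Fin k`, let `N_i(D)` be the number
of vertices `w : V` such that some `D' ∈ T` agrees with `D` on all `j < i` and has `D' i = w`.
Then `∑_{D ∈ T} ∏_i 1 / N_i(D) ≤ 1`. -/
theorem prefix_probability_sum_le_one {V : Type*} [Fintype V] (k : ℕ) (hk : 1 ≤ k)
    (T : Finset (Fin k → V)) :
    ∑ D ∈ T, ∏ i : Fin k,
      (1 : ℝ) / ((Finset.univ.filter fun w : V =>
        ∃ D' ∈ T, (∀ j : Fin k, j < i → D' j = D j) ∧ D' i = w).card : ℝ) ≤ 1 :=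
  aux_prefix k T
end

section
/- For every graph H on k vertices and every integer n ≥ k, the normalized maximum count is non-increasing: P(H, n+1)/C(n+1, k) ≤ P(H, n)/C(n, k). -/
noncomputable def comapInduceIso {β γ : Type*} (G : SimpleGraph γ) (f : β ↪ γ) (S : Finset β) :
    ((G.comap f).induce (S : Set β)) ≃g (G.induce ((S.map f : Finset γ) : Set γ)) where
  toEquiv := (Equiv.Set.image f (S : Set β) f.injective).trans
    (Equiv.setCongr (Finset.coe_map f S).symm)
  map_rel_iff' := by
    intro a b
    simp only [Equiv.trans_apply, Equiv.setCongr_apply, SimpleGraph.comap_adj]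
    rfl

open Classical in
lemma inducedCount_comap {α β γ : Type*} [Fintype α] [Fintype β] [Fintype γ]
    (H : SimpleGraph α) (G : SimpleGraph γ) (f : β ↪ γ) :
    inducedCount H (G.comap f) =
      (Finset.univ.filter fun T : Finset γ =>
        (T.card = Fintype.card α ∧ Nonempty ((G.induce (T : Set γ)) ≃g H)) ∧
        ∀ x ∈ T, x ∈ Set.range f).card := by
  classical
  unfold inducedCount
  apply Finset.card_bij (fun S _ => S.map f)
  · intro S hS
    simp only [Finset.mem_filter, Finset.mem_univ, true_and] at hS ⊢
    refine ⟨⟨by rw [Finset.card_map]; exact hS.1, ?_⟩, ?_⟩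
    · exact ⟨(comapInduceIso G f S).symm.trans hS.2.some⟩
    · intro x hx
      obtain ⟨y, _, rfl⟩ := Finset.mem_map.mp hx
      exact ⟨y, rfl⟩
  · intro S₁ h₁ S₂ h₂ h
    exact Finset.map_injective f h
  · intro T hT
    simp only [Finset.mem_filter, Finset.mem_univ, true_and] at hT
    obtain ⟨⟨hcard, hiso⟩, hrange⟩ := hT
    have hsub : T ⊆ Finset.univ.map f := by
      intro x hx
      obtain ⟨y, rfl⟩ := hrange x hx
      exact Finset.mem_map_of_mem f (Finset.mem_univ y)
    obtain ⟨S, -, rfl⟩ := Finset.subset_map_iff.mp hsub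
    refine ⟨S, ?_, rfl⟩
    simp only [Finset.mem_filter, Finset.mem_univ, true_and]
    refine ⟨by rw [Finset.card_map] at hcard; exact hcard, ?_⟩
    exact ⟨(comapInduceIso G f S).trans hiso.some⟩


lemma bddAbove_inducedCount {α : Type*} [Fintype α] (H : SimpleGraph α) (n : ℕ) :
    BddAbove {m | ∃ G : SimpleGraph (Fin n), inducedCount H G = m} := by
  classical
  refine ⟨Fintype.card (Finset (Fin n)), ?_⟩
  rintro m ⟨G, rfl⟩
  unfold inducedCount
  exact (Finset.card_filter_le _ _).trans (le_of_eq Finset.card_univ)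

/-- For every graph `H` on `k` vertices and every `n ≥ k`, the normalized
maximum induced count is non-increasing: `P(H, n+1)/C(n+1,k) ≤ P(H, n)/C(n,k)`. -/
theorem maxInducedCount_normalized_antitone {α : Type*} [Fintype α] (H : SimpleGraph α)
    (n : ℕ) (hn : Fintype.card α ≤ n) :
    (maxInducedCount H (n + 1) : ℝ) / ((n + 1).choose (Fintype.card α) : ℝ) ≤
      (maxInducedCount H n : ℝ) / (n.choose (Fintype.card α) : ℝ) := by
  classical
  set k := Fintype.card α with hk
  set M := maxInducedCount H n with hM
  have hc1 : 0 < n.choose k := Nat.choose_pos hn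
  have hc2 : 0 < (n+1).choose k := Nat.choose_pos (hn.trans (Nat.le_succ n))
  obtain ⟨G, hG⟩ : ∃ G : SimpleGraph (Fin (n+1)),
      inducedCount H G = maxInducedCount H (n+1) :=
    Nat.sSup_mem (s := {m | ∃ G : SimpleGraph (Fin (n+1)), inducedCount H G = m})
      ⟨inducedCount H ⊥, ⟨⊥, rfl⟩⟩ (bddAbove_inducedCount H (n+1))
  set A : Finset (Finset (Fin (n+1))) := Finset.univ.filter (fun S =>
    S.card = k ∧ Nonempty ((G.induce (S : Set (Fin (n+1)))) ≃g H)) with hA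
  have hAcard : A.card = inducedCount H G := by
    rw [hA, inducedCount]
  -- key double counting
  have hsum : ∑ v : Fin (n+1), (A.filter fun S => v ∉ S).card = ((n+1) - k) * A.card := by
    calc ∑ v : Fin (n+1), (A.filter fun S => v ∉ S).card
        = ∑ v : Fin (n+1), ∑ S ∈ A, if v ∉ S then 1 else 0 :=
          Finset.sum_congr rfl (fun v _ => Finset.card_filter _ _)
      _ = ∑ S ∈ A, ∑ v : Fin (n+1), if v ∉ S then 1 else 0 := Finset.sum_comm
      _ = ∑ _S ∈ A, ((n+1) - k) := Finset.sum_congr rfl (fun S hS => by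
            have hSk : S.card = k := ((Finset.mem_filter.mp hS).2).1
            have h2 : (∑ v : Fin (n+1), if v ∉ S then 1 else 0)
                = (Finset.univ.filter (fun v : Fin (n+1) => v ∉ S)).card :=
              (Finset.card_filter _ _).symm
            have h3 : Finset.univ.filter (fun v : Fin (n+1) => v ∉ S) = Sᶜ := by
              ext x; simp
            rw [h2, h3, Finset.card_compl, hSk, Fintype.card_fin])
      _ = ((n+1) - k) * A.card := by rw [Finset.sum_const, smul_eq_mul, mul_comm]
  -- pigeonhole
  obtain ⟨v, -, hv⟩ : ∃ v ∈ Finset.univ, ((n+1) - k) * A.card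
      ≤ (n+1) * (A.filter fun S => v ∉ S).card := by
    apply Finset.exists_le_of_sum_le Finset.univ_nonempty
    have h4 : ∑ v : Fin (n+1), (n+1) * (A.filter fun S => v ∉ S).card
        = (n+1) * (((n+1) - k) * A.card) := by rw [← Finset.mul_sum, hsum]
    rw [h4, Finset.sum_const, Finset.card_univ, Fintype.card_fin, smul_eq_mul]
  -- deleting the vertex v
  have hcardne : Fintype.card {w : Fin (n+1) // w ≠ v} = n := by
    simp [Fintype.card_subtype_compl]
  let e : Fin n ≃ {w : Fin (n+1) // w ≠ v} := (Fintype.equivFinOfCardEq hcardne).symm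
  let f : Fin n ↪ Fin (n+1) := e.toEmbedding.trans (Function.Embedding.subtype _)
  have hrange : Set.range f = {w : Fin (n+1) | w ≠ v} := by
    ext x
    constructor
    · rintro ⟨y, rfl⟩; exact (e y).2
    · intro hx; exact ⟨e.symm ⟨x, hx⟩, by simp [f]⟩
  have hle : (A.filter fun S => v ∉ S).card ≤ M := by
    have heq : (A.filter fun S => v ∉ S).card = inducedCount H (G.comap f) := by
      rw [inducedCount_comap H G f, hA, Finset.filter_filter]
      congr 1
      ext T
      simp only [Finset.mem_filter, Finset.mem_univ, true_and]
      constructor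
      · rintro ⟨h1, h2⟩
        exact ⟨h1, fun x hx => by rw [hrange]; rintro rfl; exact h2 hx⟩
      · rintro ⟨h1, h2⟩
        refine ⟨h1, fun hvT => ?_⟩
        have h5 := h2 v hvT
        rw [hrange] at h5
        exact h5 rfl
    rw [heq, hM, maxInducedCount]
    exact le_csSup (bddAbove_inducedCount H n) ⟨G.comap f, rfl⟩
  -- conclude
  have key : ((n+1) - k) * maxInducedCount H (n+1) ≤ (n+1) * M := by
    rw [← hG, ← hAcard]
    exact hv.trans (Nat.mul_le_mul_left _ hle)
  rw [div_le_div_iff₀ (by positivity) (by positivity)]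
  have hid : (n+1) * n.choose k = (n+1).choose k * ((n+1) - k) := by
    have h1 := Nat.add_one_mul_choose_eq n k
    have h2 := Nat.choose_succ_right_eq (n+1) k
    exact h1.trans h2
  have keynat : maxInducedCount H (n+1) * n.choose k ≤ M * (n+1).choose k := by
    have h3 : (n+1) * (maxInducedCount H (n+1) * n.choose k)
        ≤ (n+1) * (M * (n+1).choose k) := by
      calc (n+1) * (maxInducedCount H (n+1) * n.choose k)
          = (((n+1) - k) * maxInducedCount H (n+1)) * (n+1).choose k := by
            rw [Nat.mul_comm ((n+1).choose k) ((n+1) - k)] at hid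
            calc (n+1) * (maxInducedCount H (n+1) * n.choose k)
                = maxInducedCount H (n+1) * ((n+1) * n.choose k) := by ring
              _ = maxInducedCount H (n+1) * (((n+1) - k) * (n+1).choose k) := by rw [hid]
              _ = (((n+1) - k) * maxInducedCount H (n+1)) * (n+1).choose k := by ring
        _ ≤ ((n+1) * M) * (n+1).choose k := Nat.mul_le_mul_right _ key
        _ = (n+1) * (M * (n+1).choose k) := by ring
    exact Nat.le_of_mul_le_mul_left h3 (Nat.succ_pos n)
  exact_mod_cast keynat
end

section
/- For every graph H on k ≥ 2 vertices, if the sequence n ↦ P(H, n)/C(n, k) converges to a limit L as n → ∞, then L ≥ k!/(k^k − k). -/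
open Finset

section InducedCopies

variable {α β γ : Type*} [Fintype α] [Fintype β] [Fintype γ]
  {H : SimpleGraph α} {G : SimpleGraph β} {G' : SimpleGraph γ}

open Classical in
noncomputable def inducedCopies (H : SimpleGraph α) (G : SimpleGraph β) : Finset (Finset β) :=
  univ.filter fun S : Finset β => S.card = Fintype.card α ∧ Nonempty (G.induce (S : Set β) ≃g H)

lemma inducedCount_eq_card_inducedCopies (H : SimpleGraph α) (G : SimpleGraph β) :
    inducedCount H G = #(inducedCopies H G) := rfl

lemma map_univ_mem_inducedCopies (φ : H ↪g G) : univ.map φ.toEmbedding ∈ inducedCopies H G := by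
  classical
  have hrange : ((univ.map φ.toEmbedding : Finset β) : Set β) = Set.range φ := by simp
  refine mem_filter.2 ⟨mem_univ _, by simp, ?_⟩
  rw [hrange]
  exact ⟨φ.isoInduceRange.symm⟩

lemma exists_embedding_of_mem_inducedCopies {S : Finset β} (hS : S ∈ inducedCopies H G) :
    ∃ φ : H ↪g G, univ.map φ.toEmbedding = S := by
  classical
  obtain ⟨-, ⟨e⟩⟩ := (mem_filter.1 hS).2
  refine ⟨(SimpleGraph.Embedding.induce (S : Set β)).comp e.symm.toEmbedding, ?_⟩
  ext b
  simp only [mem_map, mem_univ, true_and]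
  constructor
  · rintro ⟨a, rfl⟩
    exact (e.symm a).2
  · intro hb
    exact ⟨e ⟨b, hb⟩, by simp⟩

lemma map_mem_inducedCopies (ψ : G ↪g G') {S : Finset β} (hS : S ∈ inducedCopies H G) :
    S.map ψ.toEmbedding ∈ inducedCopies H G' := by
  obtain ⟨φ, rfl⟩ := exists_embedding_of_mem_inducedCopies hS
  rw [Finset.map_map]
  exact map_univ_mem_inducedCopies (ψ.comp φ)

lemma inducedCount_le_of_embedding (ψ : G ↪g G') : inducedCount H G ≤ inducedCount H G' :=
  card_le_card_of_injOn (·.map ψ.toEmbedding) (fun _ hS => map_mem_inducedCopies ψ hS)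
    (Finset.map_injective _).injOn

lemma inducedCount_le_two_pow (G : SimpleGraph β) : inducedCount H G ≤ 2 ^ Fintype.card β := by
  classical exact (card_le_univ _).trans (by simp)

end InducedCopies

section MaxInducedCount

variable {α β : Type*} [Fintype α] [Fintype β] (H : SimpleGraph α)

lemma bddAbove_range_inducedCount (n : ℕ) :
    BddAbove (Set.range fun G : SimpleGraph (Fin n) => inducedCount H G) :=
  ⟨2 ^ n, by rintro m ⟨G, rfl⟩; simpa using inducedCount_le_two_pow (H := H) G⟩

lemma inducedCount_le_maxInducedCount_s10 (G : SimpleGraph β) :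
    inducedCount H G ≤ maxInducedCount H (Fintype.card β) := by
  let e := Fintype.equivFin β
  exact (inducedCount_le_of_embedding (SimpleGraph.Iso.map e G).toEmbedding).trans
    (le_csSup (bddAbove_range_inducedCount H _) ⟨_, rfl⟩)

lemma exists_inducedCount_eq_maxInducedCount (n : ℕ) :
    ∃ G : SimpleGraph (Fin n), inducedCount H G = maxInducedCount H n :=
  Nat.sSup_mem (Set.range_nonempty _) (bddAbove_range_inducedCount H n)

end MaxInducedCount

section LexProd

variable {α β : Type*}

def lexProd (H : SimpleGraph α) (G : SimpleGraph β) : SimpleGraph (α × β) where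
  Adj x y := H.Adj x.1 y.1 ∨ x.1 = y.1 ∧ G.Adj x.2 y.2
  symm := ⟨fun _ _ => Or.imp (fun h => h.symm) fun h => ⟨h.1.symm, h.2.symm⟩⟩
  loopless := ⟨fun x h => h.elim (H.loopless.irrefl x.1) fun h => G.loopless.irrefl x.2 h.2⟩

variable (H : SimpleGraph α) (G : SimpleGraph β)

def lexProd.transversalEmbedding (f : α → β) : H ↪g lexProd H G where
  toFun a := (a, f a)
  inj' _ _ h := congrArg Prod.fst h
  map_rel_iff' {a b} := by
    change H.Adj a b ∨ a = b ∧ G.Adj (f a) (f b) ↔ H.Adj a b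
    exact or_iff_left fun ⟨hab, h⟩ => G.loopless.irrefl _ (hab ▸ h)

def lexProd.fiberEmbedding (a : α) : G ↪g lexProd H G where
  toFun b := (a, b)
  inj' _ _ h := congrArg Prod.snd h
  map_rel_iff' {b b'} := by
    change H.Adj a a ∨ a = a ∧ G.Adj b b' ↔ G.Adj b b'
    simp

lemma lexProd.map_fiberEmbedding_injOn :
    Set.InjOn (fun p : α × Finset β => p.2.map (lexProd.fiberEmbedding H G p.1).toEmbedding)
      {p | p.2.Nonempty} := by
  rintro ⟨a, S⟩ ⟨b, hb⟩ ⟨a', S'⟩ - h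
  dsimp only at h
  have hab : (a, b) ∈ S'.map (lexProd.fiberEmbedding H G a').toEmbedding :=
    h ▸ mem_map_of_mem (lexProd.fiberEmbedding H G a).toEmbedding hb
  obtain ⟨b', -, hb'⟩ := mem_map.1 hab
  obtain rfl : a' = a := congrArg Prod.fst hb'
  exact Prod.ext rfl (Finset.map_injective _ h)

variable [Fintype α]

lemma lexProd.map_univ_transversalEmbedding_injective :
    Function.Injective fun f : α → β =>
      univ.map (lexProd.transversalEmbedding H G f).toEmbedding := by
  intro f g hfg
  funext a
  have ha : (a, f a) ∈ univ.map (lexProd.transversalEmbedding H G g).toEmbedding := by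
    dsimp only at hfg
    rw [← hfg]
    exact mem_map_of_mem (lexProd.transversalEmbedding H G f).toEmbedding (mem_univ a)
  obtain ⟨a', -, h⟩ := mem_map.1 ha
  obtain rfl : a' = a := congrArg Prod.fst h
  exact (congrArg Prod.snd h).symm

variable {H G}

lemma lexProd.map_univ_transversalEmbedding_ne_map_fiberEmbedding (hk : 1 < Fintype.card α)
    (f : α → β) (a : α) (S : Finset β) :
    univ.map (lexProd.transversalEmbedding H G f).toEmbedding ≠
      S.map (lexProd.fiberEmbedding H G a).toEmbedding := by
  obtain ⟨x, y, hxy⟩ := Fintype.exists_pair_of_one_lt_card hk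
  intro h
  have fst_eq : ∀ z, (z, f z) ∈ S.map (lexProd.fiberEmbedding H G a).toEmbedding → z = a := by
    intro z hz
    obtain ⟨b, -, hb⟩ := mem_map.1 hz
    exact (congrArg Prod.fst hb).symm
  rw [← h] at fst_eq
  exact hxy ((fst_eq x (mem_map_of_mem _ (mem_univ x))).trans
    (fst_eq y (mem_map_of_mem _ (mem_univ y))).symm)

variable [Fintype β]

lemma card_pow_add_mul_inducedCount_le (hk : 1 < Fintype.card α) :
    Fintype.card β ^ Fintype.card α + Fintype.card α * inducedCount H G ≤
      inducedCount H (lexProd H G) := by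
  classical
  set transversals :=
    univ.image fun f : α → β => univ.map (lexProd.transversalEmbedding H G f).toEmbedding
  set fiberCopies := (univ ×ˢ inducedCopies H G).image fun p : α × Finset β =>
    p.2.map (lexProd.fiberEmbedding H G p.1).toEmbedding
  have hT : #transversals = Fintype.card β ^ Fintype.card α := by
    rw [card_image_of_injective _ (lexProd.map_univ_transversalEmbedding_injective H G),
      card_univ, Fintype.card_fun]
  have hF : #fiberCopies = Fintype.card α * inducedCount H G := by
    rw [card_image_of_injOn, card_product, card_univ, inducedCount_eq_card_inducedCopies]
    refine (lexProd.map_fiberEmbedding_injOn H G).mono fun p hp => ?_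
    rw [Set.mem_ofPred_eq, ← card_pos, ((mem_filter.1 (mem_product.1 hp).2).2).1]
    omega
  have hdisj : Disjoint transversals fiberCopies := by
    simp only [transversals, fiberCopies, disjoint_left, mem_image, not_exists, not_and]
    rintro _ ⟨f, -, rfl⟩ ⟨a, S⟩ -
    exact (lexProd.map_univ_transversalEmbedding_ne_map_fiberEmbedding hk f a S).symm
  have hsub : transversals ∪ fiberCopies ⊆ inducedCopies H (lexProd H G) := by
    refine union_subset (image_subset_iff.2 fun f _ => map_univ_mem_inducedCopies _) ?_
    exact image_subset_iff.2 fun p hp => map_mem_inducedCopies _ (mem_product.1 hp).2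
  rw [← hT, ← hF, ← card_union_of_disjoint hdisj]
  exact card_le_card hsub

end LexProd

lemma pow_add_mul_maxInducedCount_le {α : Type*} [Fintype α] (H : SimpleGraph α)
    (hk : 1 < Fintype.card α) (n : ℕ) :
    n ^ Fintype.card α + Fintype.card α * maxInducedCount H n ≤
      maxInducedCount H (Fintype.card α * n) := by
  obtain ⟨G, hG⟩ := exists_inducedCount_eq_maxInducedCount H n
  have hcount := card_pow_add_mul_inducedCount_le (H := H) (G := G) hk
  rw [Fintype.card_fin, hG] at hcount
  simpa using hcount.trans (inducedCount_le_maxInducedCount_s10 H (lexProd H G))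

lemma mul_geom_sum_le_of_add_mul_le {R : Type*} [CommSemiring R] [PartialOrder R]
    [IsOrderedRing R] {a : ℕ → R} {c r : R} (hr : 0 ≤ r) (h0 : 0 ≤ a 0)
    (h : ∀ m, c + r * a m ≤ a (m + 1)) (m : ℕ) : c * ∑ t ∈ range m, r ^ t ≤ a m := by
  induction m with
  | zero => simpa using h0
  | succ m ih =>
    calc c * ∑ t ∈ range (m + 1), r ^ t = c + r * (c * ∑ t ∈ range m, r ^ t) := by
          rw [geom_sum_succ]; ring
      _ ≤ c + r * a m := by gcongr
      _ ≤ a (m + 1) := h m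

lemma inv_pow_mul_geom_sum_le_maxInducedCount_div {α : Type*} [Fintype α] (H : SimpleGraph α)
    (hk : 1 < Fintype.card α) (m : ℕ) :
    (((Fintype.card α : ℝ) ^ Fintype.card α)⁻¹ *
        ∑ t ∈ range m, ((Fintype.card α : ℝ) / (Fintype.card α : ℝ) ^ Fintype.card α) ^ t) ≤
      maxInducedCount H (Fintype.card α ^ m) / ((Fintype.card α : ℝ) ^ m) ^ Fintype.card α := by
  set k := Fintype.card α
  refine mul_geom_sum_le_of_add_mul_le
    (a := fun m => (maxInducedCount H (k ^ m) : ℝ) / ((k : ℝ) ^ m) ^ k) ?_ ?_ (fun m => ?_) m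
  · positivity
  · positivity
  have hrec : ((k : ℝ) ^ m) ^ k + k * maxInducedCount H (k ^ m) ≤
      maxInducedCount H (k ^ (m + 1)) := by
    have hrec := pow_add_mul_maxInducedCount_le H hk (k ^ m)
    rw [← pow_succ'] at hrec
    exact_mod_cast hrec
  calc ((k : ℝ) ^ k)⁻¹ + k / (k : ℝ) ^ k * (maxInducedCount H (k ^ m) / ((k : ℝ) ^ m) ^ k)
      = (((k : ℝ) ^ m) ^ k + k * maxInducedCount H (k ^ m)) / ((k : ℝ) ^ (m + 1)) ^ k := by
        field_simp
        ring
    _ ≤ maxInducedCount H (k ^ (m + 1)) / ((k : ℝ) ^ (m + 1)) ^ k := by gcongr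

lemma factorial_mul_div_pow_le_div_choose {n k : ℕ} (hkn : k ≤ n) {N : ℝ} (hN : 0 ≤ N) :
    (k.factorial : ℝ) * (N / (n : ℝ) ^ k) ≤ N / n.choose k := by
  have hchoose : (0 : ℝ) < n.choose k := by exact_mod_cast Nat.choose_pos hkn
  calc (k.factorial : ℝ) * (N / (n : ℝ) ^ k) = N / ((n : ℝ) ^ k / k.factorial) := by
        field_simp
    _ ≤ N / n.choose k := div_le_div_of_nonneg_left hN hchoose (Nat.choose_le_pow_div k n)

/-- For every graph `H` on `k ≥ 2` vertices, if `P(H,n)/C(n,k)` converges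
to `L`, then `L ≥ k!/(k^k - k)` (the Pippenger–Golumbic lower bound). -/
theorem inducibility_lower_bound {α : Type*} [Fintype α] (H : SimpleGraph α)
    (hk : 2 ≤ Fintype.card α) (L : ℝ)
    (h : Filter.Tendsto
      (fun n : ℕ => (maxInducedCount H n : ℝ) / (n.choose (Fintype.card α) : ℝ))
      Filter.atTop (nhds L)) :
    (Nat.factorial (Fintype.card α) : ℝ) /
        ((Fintype.card α : ℝ) ^ (Fintype.card α) - (Fintype.card α : ℝ)) ≤ L := by
  set k := Fintype.card α
  have hkR : (1 : ℝ) < k := by exact_mod_cast hk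
  have hk_lt_pow : (k : ℝ) < (k : ℝ) ^ k := by
    simpa using pow_lt_pow_right₀ hkR hk
  set r := (k : ℝ) / (k : ℝ) ^ k
  have hr1 : r < 1 := (div_lt_one (by positivity)).2 hk_lt_pow
  have hlim : Filter.Tendsto (fun m => (k.factorial : ℝ) * (((k : ℝ) ^ k)⁻¹ * ∑ t ∈ range m, r ^ t))
      Filter.atTop (nhds ((k.factorial : ℝ) / ((k : ℝ) ^ k - k))) := by
    convert ((hasSum_geometric_of_lt_one (by positivity) hr1).tendsto_sum_nat.const_mul
      ((k : ℝ) ^ k)⁻¹).const_mul (k.factorial : ℝ) using 2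
    rw [one_sub_div (by positivity)]
    field_simp
  refine le_of_tendsto_of_tendsto hlim (h.comp (tendsto_pow_atTop_atTop_of_one_lt hk))
    (Filter.eventually_atTop.2 ⟨1, fun m hm => ?_⟩)
  calc _ ≤ (k.factorial : ℝ) * (maxInducedCount H (k ^ m) / ((k ^ m : ℕ) : ℝ) ^ k) := by
        push_cast
        gcongr
        exact inv_pow_mul_geom_sum_le_maxInducedCount_div H hk m
    _ ≤ _ := factorial_mul_div_pow_le_div_choose (Nat.le_self_pow (by omega) k) (by positivity)
end

section
/- For every integer k ≥ 5 and every graph G on n ≥ k vertices, the number of k-element vertex subsets of G inducing a subgraph isomorphic to the cycle C_k satisfies P(C_k, G) ≤ (2n/k)·((n−1)/(k−1))^{k−1}. -/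
/-!
Count labelled induced cycles, i.e. embeddings `f : cycleGraph k ↪g G`: every induced copy of
`C_k` carries `2k` of them, one for each rotation and reflection of the cycle. An embedding is
determined by `v = f 0`, the two neighbours `f 1 ≠ f (k - 1)` of `v`, and the induced path
`f 1, …, f (k - 2)`, whose later vertices avoid `v` and its neighbourhood. Splitting the remaining
vertices into neighbours and non-neighbours of the current endpoint and applying AM–GM shows that
there are at most `(|U| / j) ^ j` induced paths of length `j` from a fixed vertex into `U`. With
`d = deg v` and `d + |U| = n - 1`, the embeddings with `f 0 = v` number at most
`d (d - 1) (|U| / (k - 3)) ^ (k - 3) ≤ 4 ((n - 1) / (k - 1)) ^ (k - 1)`, again by AM–GM.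
-/

theorem mul_div_pow_le_add_div_succ_pow {a b : ℝ} (ha : 0 ≤ a) (hb : 0 ≤ b) (j : ℕ) :
    a * (b / j) ^ j ≤ ((a + b) / (j + 1)) ^ (j + 1) := by
  rcases j.eq_zero_or_pos with rfl | hj
  · simp only [pow_zero, mul_one, CharP.cast_eq_zero, zero_add, div_one, pow_one]
    linarith
  have hj' : (j : ℝ) ≠ 0 := by positivity
  obtain ⟨c, hc, rfl⟩ : ∃ c, 0 ≤ c ∧ b = j * c :=
    ⟨b / j, by positivity, by field_simp⟩
  rw [mul_div_cancel_left₀ _ hj']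
  rcases hc.eq_or_lt with rfl | hc
  · rw [zero_pow hj.ne', mul_zero]
    positivity
  set t := (a + j * c) / (j + 1) with ht
  -- Bernoulli's inequality `1 + (j+1) x ≤ (1 + x)^(j+1)` at `x = t / c - 1`
  have hx : -2 ≤ t / c - 1 := by
    have : 0 ≤ t / c := by positivity
    linarith
  have hbern := one_add_mul_le_pow hx (j + 1)
  rw [add_sub_cancel, div_pow, le_div_iff₀ (by positivity)] at hbern
  calc a * c ^ j = (1 + ((j + 1 : ℕ) : ℝ) * (t / c - 1)) * c ^ (j + 1) := by
        rw [ht]; field_simp; push_cast; ring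
    _ ≤ t ^ (j + 1) := hbern

theorem mul_mul_div_pow_le_of_add_le {d d' M N : ℝ} (m : ℕ) (hd' : 0 ≤ d') (hd'd : d' ≤ d)
    (hM : 0 ≤ M) (hN : d + M ≤ N) :
    d * d' * (M / m) ^ m ≤ 4 * (N / (m + 2)) ^ (m + 2) := by
  have hd : 0 ≤ d := hd'.trans hd'd
  -- AM–GM for `d / 2`, `d' / 2` and `m` copies of `M / m`
  have h₁ := mul_div_pow_le_add_div_succ_pow (by positivity : 0 ≤ d' / 2) hM m
  have h₂ := mul_div_pow_le_add_div_succ_pow (by positivity : 0 ≤ d / 2)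
    (by positivity : 0 ≤ d' / 2 + M) (m + 1)
  push_cast at h₂
  have h₃ : ((d / 2 + (d' / 2 + M)) / (m + 1 + 1)) ^ (m + 1 + 1) ≤ (N / (m + 2)) ^ (m + 2) := by
    rw [add_assoc (m : ℝ), one_add_one_eq_two]
    gcongr
    linarith
  calc d * d' * (M / m) ^ m = 4 * (d / 2 * (d' / 2 * (M / m) ^ m)) := by ring
    _ ≤ 4 * (d / 2 * ((d' / 2 + M) / (m + 1)) ^ (m + 1)) := by gcongr
    _ ≤ 4 * (N / (m + 2)) ^ (m + 2) := by linarith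

namespace SimpleGraph

open Finset

variable {α V : Type*}

theorem inducedCount_mul_card_iso_le [Fintype α] [Fintype V] (H : SimpleGraph α)
    (G : SimpleGraph V) : inducedCount H G * Nat.card (H ≃g H) ≤ Nat.card (H ↪g G) := by
  classical
  set S := univ.filter fun T : Finset V =>
    #T = Fintype.card α ∧ Nonempty (G.induce (T : Set V) ≃g H)
  have hiso : ∀ T : S, Nonempty (G.induce ((T : Finset V) : Set V) ≃g H) :=
    fun T => (mem_filter.1 T.2).2.2
  let φ : S × (H ≃g H) → (H ↪g G) := fun p =>
    (Embedding.induce _).comp (p.2.trans (Classical.choice (hiso p.1)).symm).toRelEmbedding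
  have hrange : ∀ p, Set.range (φ p) = ((p.1 : Finset V) : Set V) := fun p => by
    simp only [φ, Embedding.coe_comp, RelIso.coe_toRelEmbedding]
    rw [(RelIso.surjective _).range_comp]
    exact Subtype.range_coe
  have hφ : Function.Injective φ := by
    rintro ⟨T, σ⟩ ⟨T', σ'⟩ h
    obtain rfl : T = T' := Subtype.ext <| coe_injective <| by
      rw [← hrange (T, σ), ← hrange (T', σ'), h]
    refine Prod.ext rfl (RelIso.ext fun a => ?_)
    exact (Classical.choice (hiso T)).symm.injective
      (Subtype.val_injective (DFunLike.congr_fun h a))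
  calc inducedCount H G * Nat.card (H ≃g H) = Nat.card (S × (H ≃g H)) := by
        rw [Nat.card_prod, Nat.card_eq_finsetCard]; rfl
    _ ≤ Nat.card (H ↪g G) := Nat.card_le_card_of_injective φ hφ

theorem cycleGraph_adj_iff_val {n : ℕ} {u v : Fin (n + 2)} :
    (cycleGraph (n + 2)).Adj u v ↔ u.val + 1 = v.val ∨ v.val + 1 = u.val ∨
      (u.val = 0 ∧ v.val = n + 1) ∨ (v.val = 0 ∧ u.val = n + 1) := by
  have hu := u.isLt
  have hv := v.isLt
  rw [cycleGraph_adj']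
  rcases lt_trichotomy u v with h | rfl | h
  · rw [Fin.coe_sub_iff_lt.2 h, Fin.coe_sub_iff_le.2 h.le]
    have : u.val < v.val := h
    omega
  · simp only [sub_self, Fin.val_zero]
    omega
  · rw [Fin.coe_sub_iff_le.2 h.le, Fin.coe_sub_iff_lt.2 h]
    have : v.val < u.val := h
    omega

theorem cycleGraph_comap_succ_castSucc (m : ℕ) :
    (cycleGraph (m + 3)).comap (fun i : Fin (m + 1) => i.castSucc.succ) = pathGraph (m + 1) := by
  ext i j
  simp only [comap_adj, cycleGraph_adj_iff_val, pathGraph_adj, Fin.val_succ, Fin.val_castSucc]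
  omega

theorem pathGraph_comap_succ (n : ℕ) : (pathGraph (n + 1)).comap Fin.succ = pathGraph n := by
  ext i j
  simp only [comap_adj, pathGraph_adj, Fin.val_succ]
  omega

namespace cycleGraph

variable {n : ℕ} [NeZero n]

def rotation (a : Fin n) : cycleGraph n ≃g cycleGraph n where
  toEquiv := Equiv.addLeft a
  map_rel_iff' := by
    intro i j
    simp [cycleGraph_adj']

def reflection (a : Fin n) : cycleGraph n ≃g cycleGraph n where
  toEquiv := Equiv.subLeft a
  map_rel_iff' := by
    intro i j
    simp [cycleGraph_adj', or_comm]

@[simp] theorem rotation_apply (a i : Fin n) : rotation a i = a + i := rfl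

@[simp] theorem reflection_apply (a i : Fin n) : reflection a i = a - i := rfl

end cycleGraph

theorem two_mul_le_card_iso_cycleGraph (m : ℕ) :
    2 * (m + 3) ≤ Nat.card (cycleGraph (m + 3) ≃g cycleGraph (m + 3)) := by
  have := DFunLike.finite (cycleGraph (m + 3) ≃g cycleGraph (m + 3))
  have hinj : Function.Injective
      (Sum.elim (cycleGraph.rotation (n := m + 3)) cycleGraph.reflection) := by
    refine Function.Injective.sumElim ?_ ?_ ?_
    · intro a b h
      simpa using DFunLike.congr_fun h 0
    · intro a b h
      simpa using DFunLike.congr_fun h 0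
    · intro a b h
      obtain rfl : a = b := by simpa using DFunLike.congr_fun h 0
      have h1 : a + 1 = a + -1 := by simpa [sub_eq_add_neg] using DFunLike.congr_fun h 1
      have h2 := congrArg Fin.val (eq_neg_iff_add_eq_zero.mp (add_left_cancel h1))
      rw [Fin.val_add, Fin.val_one, Fin.val_zero, Nat.mod_eq_of_lt (by omega)] at h2
      omega
  simpa [two_mul] using Nat.card_le_card_of_injective _ hinj

open Classical in
noncomputable def inducedPathsFrom [Fintype V] (G : SimpleGraph V) (x : V) (U : Finset V)
    (j : ℕ) : Finset (Fin (j + 1) → V) :=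
  univ.filter fun p => p 0 = x ∧ (∀ i, i ≠ 0 → p i ∈ U) ∧ G.comap p = pathGraph (j + 1)

theorem mem_inducedPathsFrom [Fintype V] {G : SimpleGraph V} {x : V} {U : Finset V} {j : ℕ}
    {p : Fin (j + 1) → V} :
    p ∈ inducedPathsFrom G x U j ↔
      p 0 = x ∧ (∀ i, i ≠ 0 → p i ∈ U) ∧ G.comap p = pathGraph (j + 1) := by
  simp [inducedPathsFrom]

theorem card_inducedPathsFrom_le [Fintype V] (G : SimpleGraph V) (x : V) (U : Finset V) (j : ℕ) :
    (#(inducedPathsFrom G x U j) : ℝ) ≤ (#U / j) ^ j := by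
  classical
  induction j generalizing x U with
  | zero =>
    have : #(inducedPathsFrom G x U 0) ≤ 1 := card_le_one.2 fun p hp q hq => by
      funext i
      rw [Fin.fin_one_eq_zero i, (mem_inducedPathsFrom.1 hp).1, (mem_inducedPathsFrom.1 hq).1]
    simpa using (Nat.cast_le (α := ℝ)).2 this
  | succ j ih =>
    set N := U.filter (G.Adj x)
    set U' := U.filter (¬ G.Adj x ·)
    -- a path from `x` is `x` followed by a path from a neighbour `y` of `x` avoiding the others
    have hinj : #(inducedPathsFrom G x U (j + 1)) ≤
        #(N.sigma fun y => inducedPathsFrom G y U' j) := by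
      refine card_le_card_of_injOn (fun p => ⟨p 1, Fin.tail p⟩) (fun p hp => ?_) ?_
      · obtain ⟨rfl, hU, hpath⟩ := mem_inducedPathsFrom.1 hp
        have hadj : ∀ a b, G.Adj (p a) (p b) ↔ (pathGraph (j + 2)).Adj a b := fun a b => by
          rw [← hpath]; rfl
        simp only [coe_sigma, Set.mem_sigma_iff, mem_coe, mem_filter, N, U', mem_inducedPathsFrom]
        refine ⟨⟨hU 1 one_ne_zero, (hadj 0 1).2 (by simp [pathGraph_adj])⟩, rfl,
          fun i hi => ⟨hU _ i.succ_ne_zero, fun h => hi ?_⟩, ?_⟩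
        · simpa [pathGraph_adj] using (hadj 0 i.succ).1 h
        · change G.comap (p ∘ Fin.succ) = _
          rw [← comap_comap, hpath, pathGraph_comap_succ]
      · intro p hp q hq hpq
        simp only [Sigma.mk.injEq, heq_eq_eq] at hpq
        rw [← Fin.cons_self_tail p, ← Fin.cons_self_tail q, hpq.2,
          (mem_inducedPathsFrom.1 hp).1, (mem_inducedPathsFrom.1 hq).1]
    have hsplit : (#N : ℝ) + #U' = #U := by
      exact_mod_cast card_filter_add_card_filter_not (G.Adj x)
    calc (#(inducedPathsFrom G x U (j + 1)) : ℝ)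
        ≤ ∑ y ∈ N, (#(inducedPathsFrom G y U' j) : ℝ) := by
          exact_mod_cast hinj.trans_eq (card_sigma _ _)
      _ ≤ ∑ _y ∈ N, (#U' / j : ℝ) ^ j := sum_le_sum fun y _ => ih y U'
      _ = #N * (#U' / j : ℝ) ^ j := by rw [sum_const, nsmul_eq_mul]
      _ ≤ (#U / (j + 1 : ℕ) : ℝ) ^ (j + 1) := by
          rw [← hsplit]; push_cast
          exact mul_div_pow_le_add_div_succ_pow (by positivity) (by positivity) j

theorem card_cycleGraph_embedding_le_sum [Fintype V] [DecidableEq V] (G : SimpleGraph V)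
    [DecidableRel G.Adj] (m : ℕ) :
    Nat.card (cycleGraph (m + 3) ↪g G) ≤
      ∑ v, ∑ y ∈ G.neighborFinset v, #((G.neighborFinset v).erase y) *
        #(inducedPathsFrom G y (insert v (G.neighborFinset v))ᶜ m) := by
  set T := univ.sigma fun v => (G.neighborFinset v).sigma fun y =>
    (G.neighborFinset v).erase y ×ˢ inducedPathsFrom G y (insert v (G.neighborFinset v))ᶜ m
  let code : (cycleGraph (m + 3) ↪g G) → T := fun f =>
    ⟨⟨f 0, f 1, f (Fin.last _), fun i => f i.castSucc.succ⟩, by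
      simp only [T, mem_sigma, mem_univ, true_and, mem_neighborFinset, mem_erase, mem_product,
        mem_inducedPathsFrom, mem_compl, mem_insert, not_or, f.map_adj_iff, cycleGraph_adj_iff_val,
        f.injective.ne_iff]
      refine ⟨by simp, ⟨by simp [Fin.ext_iff], by simp⟩, by simp, ?_, ?_⟩
      · intro i hi
        have hi' := Fin.val_ne_iff.2 hi
        rw [Fin.val_zero] at hi'
        refine ⟨Fin.succ_ne_zero _, ?_⟩
        simp only [Fin.val_zero, Fin.val_succ, Fin.val_castSucc]
        omega
      · change G.comap (f ∘ fun i : Fin (m + 1) => i.castSucc.succ) = _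
        rw [← comap_comap, Embedding.comap_eq, cycleGraph_comap_succ_castSucc]⟩
  have hcode : Function.Injective code := by
    intro f g h
    simp only [code, Subtype.mk.injEq, Sigma.mk.injEq, heq_eq_eq, Prod.mk.injEq] at h
    obtain ⟨h0, -, hlast, hpath⟩ := h
    ext x
    induction x using Fin.cases with
    | zero => exact h0
    | succ x =>
      induction x using Fin.lastCases with
      | last => rwa [Fin.succ_last]
      | cast i => exact congrFun hpath i
  calc Nat.card (cycleGraph (m + 3) ↪g G) ≤ Nat.card T :=
        Nat.card_le_card_of_injective code hcode
    _ = #T := Nat.card_eq_finsetCard T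
    _ = _ := by simp only [T, card_sigma, card_product]

theorem card_cycleGraph_embedding_le [Fintype V] (G : SimpleGraph V) (m : ℕ) :
    (Nat.card (cycleGraph (m + 3) ↪g G) : ℝ) ≤
      4 * Fintype.card V * ((Fintype.card V - 1) / (m + 2)) ^ (m + 2) := by
  classical
  have hvertex : ∀ v : V, ∑ y ∈ G.neighborFinset v, (#((G.neighborFinset v).erase y) : ℝ) *
      #(inducedPathsFrom G y (insert v (G.neighborFinset v))ᶜ m) ≤
        4 * ((Fintype.card V - 1) / (m + 2)) ^ (m + 2) := fun v => by
    set N := G.neighborFinset v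
    set M := (insert v N)ᶜ
    have hNM : (#N : ℝ) + #M + 1 = Fintype.card V := by
      have := card_compl_add_card (insert v N)
      rw [card_insert_of_notMem (by simp [N])] at this
      change #M + (#N + 1) = _ at this
      exact_mod_cast (by omega : #N + #M + 1 = Fintype.card V)
    calc ∑ y ∈ N, (#(N.erase y) : ℝ) * #(inducedPathsFrom G y M m)
        ≤ ∑ _y ∈ N, ((#N - 1 : ℕ) : ℝ) * (#M / m) ^ m := sum_le_sum fun y hy => by
          rw [card_erase_of_mem hy]
          gcongr
          exact card_inducedPathsFrom_le G y M m
      _ = #N * ((#N - 1 : ℕ) : ℝ) * (#M / m) ^ m := by rw [sum_const, nsmul_eq_mul, mul_assoc]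
      _ ≤ 4 * ((Fintype.card V - 1) / (m + 2)) ^ (m + 2) :=
          mul_mul_div_pow_le_of_add_le m (by positivity)
            (by exact_mod_cast Nat.sub_le _ _) (by positivity) (by linarith)
  calc (Nat.card (cycleGraph (m + 3) ↪g G) : ℝ)
      ≤ ∑ v, ∑ y ∈ G.neighborFinset v, (#((G.neighborFinset v).erase y) : ℝ) *
          #(inducedPathsFrom G y (insert v (G.neighborFinset v))ᶜ m) := by
        exact_mod_cast card_cycleGraph_embedding_le_sum G m
    _ ≤ ∑ _v : V, 4 * ((Fintype.card V - 1) / (m + 2) : ℝ) ^ (m + 2) :=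
        sum_le_sum fun v _ => hvertex v
    _ = _ := by rw [sum_const, card_univ, nsmul_eq_mul]; ring

theorem inducedCount_cycleGraph_mul_le [Fintype V] (G : SimpleGraph V) (m : ℕ) :
    (inducedCount (cycleGraph (m + 3)) G : ℝ) * (2 * (m + 3)) ≤
      4 * Fintype.card V * ((Fintype.card V - 1) / (m + 2)) ^ (m + 2) := by
  have haut : (2 * (m + 3) : ℝ) ≤ Nat.card (cycleGraph (m + 3) ≃g cycleGraph (m + 3)) := by
    exact_mod_cast two_mul_le_card_iso_cycleGraph m
  calc (inducedCount (cycleGraph (m + 3)) G : ℝ) * (2 * (m + 3))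
      ≤ inducedCount (cycleGraph (m + 3)) G *
          Nat.card (cycleGraph (m + 3) ≃g cycleGraph (m + 3)) := by gcongr
    _ ≤ Nat.card (cycleGraph (m + 3) ↪g G) := by
        exact_mod_cast inducedCount_mul_card_iso_le (cycleGraph (m + 3)) G
    _ ≤ _ := card_cycleGraph_embedding_le G m

end SimpleGraph

theorem cycle_count_upper_bound_PG_general (k n : ℕ) (hk : 5 ≤ k)
    (G : SimpleGraph (Fin n)) :
    (inducedCount (SimpleGraph.cycleGraph k) G : ℝ) ≤
      (2 * (n : ℝ) / (k : ℝ)) * (((n : ℝ) - 1) / ((k : ℝ) - 1)) ^ (k - 1) := by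
  obtain ⟨m, rfl⟩ : ∃ m, k = m + 3 := ⟨k - 3, by omega⟩
  have hcount := SimpleGraph.inducedCount_cycleGraph_mul_le G m
  rw [Fintype.card_fin] at hcount
  rw [show m + 3 - 1 = m + 2 by omega, div_mul_eq_mul_div, le_div_iff₀ (by positivity)]
  push_cast
  rw [show (m : ℝ) + 3 - 1 = m + 2 by ring]
  linarith

/-- For every `k ≥ 5` and every graph `G` on `n ≥ k` vertices,
`P(C_k, G) ≤ (2n/k) · ((n-1)/(k-1))^(k-1)` (Pippenger–Golumbic). -/
theorem cycle_count_upper_bound_PG (k n : ℕ) (hk : 5 ≤ k) (hn : k ≤ n)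
    (G : SimpleGraph (Fin n)) :
    (inducedCount (SimpleGraph.cycleGraph k) G : ℝ) ≤
      (2 * (n : ℝ) / (k : ℝ)) * (((n : ℝ) - 1) / ((k : ℝ) - 1)) ^ (k - 1) :=
  cycle_count_upper_bound_PG_general k n hk G
end
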